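/- Let Φ ∈ ℝ^{np×n} be (n-stacked) q-error correctable, x ∈ ℝⁿ, e ∈ Σ_qⁿ, v ∈ ℝ^{np} with ‖v_i‖₂ ≤ v_max for all blocks i, and ẑ = Φx + e + v. Fix an integer r with q ≤ r ≤ 2q and set v'_max := ϑ_{p,q,r}(Φ)·v_max. Then any minimizer x̂ over χ ∈ F_{p,r}(ẑ) of the count |{i ∈ {1,…,p} : ‖ẑ_i − Φ_{Γᵢⁿ}χ‖₂ > v'_max}| satisfies ‖x̂ − x‖₂ ≤ κ^c_{p,q,r}(Φ)·v_max, where κ^c_{p,q,r}(Φ) := (ϑ_{p,q,r}(Φ) + 1)√(p−2q)/ρ_{p,2q}(Φ). -/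

import Mathlib

open scoped Classical
open Finset Matrix

noncomputable section

namespace SecureEst

variable {n p : ℕ}

/-- The `i`-th `n`-block of an `n`-stacked vector. -/
def blk (z : Fin p × Fin n → ℝ) (i : Fin p) : Fin n → ℝ := fun j => z (i, j)

/-- The `n`-stacked support of a stacked vector. -/
def blockSupp (z : Fin p × Fin n → ℝ) : Finset (Fin p) :=
  Finset.univ.filter fun i => blk z i ≠ 0

/-- The `n`-stacked ℓ⁰ "norm": number of nonzero blocks. -/
def l0n (z : Fin p × Fin n → ℝ) : ℕ := (blockSupp z).card

/-- `n`-stacked `q`-sparsity: membership in `Σ_qⁿ`. -/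
def Sparse (q : ℕ) (z : Fin p × Fin n → ℝ) : Prop := l0n z ≤ q

/-- Euclidean (ℓ²) norm of a real vector. -/
def enorm {m : Type*} [Fintype m] (x : m → ℝ) : ℝ := Real.sqrt (∑ i, x i ^ 2)

/-- `Φ_{Λⁿ}`: zero out the row-blocks of `Φ` outside `Λ`. -/
def zeroB (Λ : Finset (Fin p)) (Φ : Matrix (Fin p × Fin n) (Fin n) ℝ) :
    Matrix (Fin p × Fin n) (Fin n) ℝ :=
  fun ij k => if ij.1 ∈ Λ then Φ ij k else 0

/-- `z_{Λⁿ}`: zero out the blocks of a stacked vector outside `Λ`. -/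
def zeroV (Λ : Finset (Fin p)) (z : Fin p × Fin n → ℝ) : Fin p × Fin n → ℝ :=
  fun ij => if ij.1 ∈ Λ then z ij else 0

/-- `Φ_{Γᵢⁿ}`: the `i`-th row-block of `Φ`. -/
def rowBlk (Φ : Matrix (Fin p × Fin n) (Fin n) ℝ) (i : Fin p) :
    Matrix (Fin n) (Fin n) ℝ := fun j k => Φ (i, j) k

/-- Moore–Penrose pseudoinverse (full-column-rank formula `(MᵀM)⁻¹Mᵀ`). -/
def pinv {m k : Type*} [Fintype m] [Fintype k] [DecidableEq k]
    (M : Matrix m k ℝ) : Matrix k m ℝ := (Mᵀ * M)⁻¹ * Mᵀ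

/-- Spectral norm (largest singular value) of a real matrix. -/
def specNorm {m k : Type*} [Fintype m] [Fintype k] (M : Matrix m k ℝ) : ℝ :=
  sSup {r | ∃ x : k → ℝ, enorm x = 1 ∧ r = enorm (M.mulVec x)}

/-- Minimum singular value of a (tall) real matrix. -/
def sigmaMin {m k : Type*} [Fintype m] [Fintype k] (M : Matrix m k ℝ) : ℝ :=
  sInf {r | ∃ x : k → ℝ, enorm x = 1 ∧ r = enorm (M.mulVec x)}

/-- `(n-stacked) q`-error detectability. -/
def ErrDetectable (Φ : Matrix (Fin p × Fin n) (Fin n) ℝ) (q : ℕ) : Prop :=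
  ∀ x x' : Fin n → ℝ, ∀ e : Fin p × Fin n → ℝ,
    Sparse q e → Φ.mulVec x + e = Φ.mulVec x' → x = x'

/-- `(n-stacked) q`-error correctability. -/
def ErrCorrectable (Φ : Matrix (Fin p × Fin n) (Fin n) ℝ) (q : ℕ) : Prop :=
  ∀ x₁ x₂ : Fin n → ℝ, ∀ e₁ e₂ : Fin p × Fin n → ℝ,
    Sparse q e₁ → Sparse q e₂ →
      Φ.mulVec x₁ + e₁ = Φ.mulVec x₂ + e₂ → x₁ = x₂

/-- `(n-stacked)` cospark. -/
def cosparkN (Φ : Matrix (Fin p × Fin n) (Fin n) ℝ) : ℕ :=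
  sInf {m : ℕ | ∃ x : Fin n → ℝ, x ≠ 0 ∧ m = l0n (Φ.mulVec x)}

/-- `ρ_{p,q}(Φ)`. -/
def rho (Φ : Matrix (Fin p × Fin n) (Fin n) ℝ) (q : ℕ) : ℝ :=
  sInf {r | ∃ Λ : Finset (Fin p), Λ.card = p - q ∧ r = sigmaMin (zeroB Λ Φ)}

/-- `η_{p,q}(Φ)`. -/
def eta (Φ : Matrix (Fin p × Fin n) (Fin n) ℝ) (q : ℕ) : ℝ :=
  sSup {r | ∃ Λ : Finset (Fin p), Λ.card = p - q ∧
    ∃ i : Fin p, i ∉ Λ ∧ r = specNorm (rowBlk Φ i * pinv (zeroB Λ Φ))}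

/-- `κ^d_{p,q}(Φ)`. -/
def kappaD (Φ : Matrix (Fin p × Fin n) (Fin n) ℝ) (q : ℕ) : ℝ :=
  (Real.sqrt (p : ℝ) + 1) * Real.sqrt ((p - q : ℕ) : ℝ) / rho Φ q

/-- `κ^e_{p,q}(Φ)`. -/
def kappaE (Φ : Matrix (Fin p × Fin n) (Fin n) ℝ) (q : ℕ) : ℝ :=
  (eta Φ q * Real.sqrt ((p - q : ℕ) : ℝ) + 1) * (Real.sqrt (p : ℝ) + 1)

/-- The finite candidate set `F_{p,r}(ẑ)`. -/
def Fset (Φ : Matrix (Fin p × Fin n) (Fin n) ℝ) (r : ℕ) (z : Fin p × Fin n → ℝ) :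
    Set (Fin n → ℝ) :=
  {χ | ∃ Λ : Finset (Fin p), Λ.card = p - r ∧
    χ = (pinv (zeroB Λ Φ)).mulVec (zeroV Λ z)}

/-- `η'_{p,q,r}(Φ)`. -/
def eta' (Φ : Matrix (Fin p × Fin n) (Fin n) ℝ) (q r : ℕ) : ℝ :=
  sSup {a | ∃ Λ : Finset (Fin p), Λ.card = p - q ∧
    a = sInf {b | ∃ Λ' : Finset (Fin p), Λ' ⊆ Λ ∧ Λ'.card = p - r ∧
      b = sSup {c | ∃ i ∈ Λ \ Λ',
        c = specNorm (rowBlk Φ i * pinv (zeroB Λ' Φ))}}}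

/-- `ϑ_{p,q,r}(Φ)`. -/
def theta (Φ : Matrix (Fin p × Fin n) (Fin n) ℝ) (q r : ℕ) : ℝ :=
  max (eta' Φ q r * Real.sqrt ((p - r : ℕ) : ℝ) + 1) (Real.sqrt ((p - r : ℕ) : ℝ))

/-- `κ^c_{p,q,r}(Φ)`. -/
def kappaC (Φ : Matrix (Fin p × Fin n) (Fin n) ℝ) (q r : ℕ) : ℝ :=
  (theta Φ q r + 1) * Real.sqrt ((p - 2 * q : ℕ) : ℝ) / rho Φ (2 * q)

/-- `κ^{c'}_{p,q,r}(Φ)`. -/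
def kappaC' (Φ : Matrix (Fin p × Fin n) (Fin n) ℝ) (q r : ℕ) : ℝ :=
  (theta Φ q r - 1) / sSup {c | ∃ i : Fin p, c = specNorm (rowBlk Φ i)}

/-- Stacked observability matrix `G` with row-blocks `Gᵢ = [cᵢᵀ (cᵢA)ᵀ ⋯ (cᵢAⁿ⁻¹)ᵀ]ᵀ`. -/
def obsG (A : Matrix (Fin n) (Fin n) ℝ) (C : Matrix (Fin p) (Fin n) ℝ) :
    Matrix (Fin p × Fin n) (Fin n) ℝ :=
  fun ij k => (C * A ^ (ij.2 : ℕ)) ij.1 k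

/-- `C_Λ`: zero out the rows of `C` outside `Λ`. -/
def zeroRows (Λ : Finset (Fin p)) (C : Matrix (Fin p) (Fin n) ℝ) :
    Matrix (Fin p) (Fin n) ℝ :=
  fun i k => if i ∈ Λ then C i k else 0

/-- Observability of the pair `(A, C)`: the observability matrix has full column rank. -/
def Observable (A : Matrix (Fin n) (Fin n) ℝ) (C : Matrix (Fin p) (Fin n) ℝ) : Prop :=
  (obsG A C).rank = n

/-- `q`-redundant observability. -/
def RedObservable (A : Matrix (Fin n) (Fin n) ℝ) (C : Matrix (Fin p) (Fin n) ℝ)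
    (q : ℕ) : Prop :=
  ∀ Λ : Finset (Fin p), p - q ≤ Λ.card → Observable A (zeroRows Λ C)

/-- Euclidean norm of a complex vector. -/
def enormC {m : Type*} [Fintype m] (v : m → ℂ) : ℝ :=
  Real.sqrt (∑ i, ‖v i‖ ^ 2)

/-- The set `V(A)` of normalized complex eigenvectors of a real matrix `A`. -/
def eigSet (A : Matrix (Fin n) (Fin n) ℝ) : Set (Fin n → ℂ) :=
  {v | (∃ μ : ℂ, (A.map Complex.ofReal).mulVec v = μ • v) ∧ enormC v = 1}

/-- ℓ⁰ norm of a complex vector. -/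
def l0C (y : Fin p → ℂ) : ℕ := (Finset.univ.filter fun i => y i ≠ 0).card

/-- `n`-stacked ℓ⁰ norm of a complex stacked vector. -/
def l0nC (z : Fin p × Fin n → ℂ) : ℕ :=
  (Finset.univ.filter fun i => (fun j => z (i, j)) ≠ (0 : Fin n → ℂ)).card

/-- The dynamic security index `α_d(A, C)`. -/
def alphaD (A : Matrix (Fin n) (Fin n) ℝ) (C : Matrix (Fin p) (Fin n) ℝ) : ℕ :=
  sInf {m : ℕ | ∃ v ∈ eigSet A, m = l0C ((C.map Complex.ofReal).mulVec v)}

end SecureEst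

/-!
Fix a set `Λ` of `p - q` attack-free blocks. The subset `Λ' ⊆ Λ` of size `p - r` realising the
inner minimum in `η'` yields the candidate `χ = x + Φ_{Λ'}† v_{Λ'} ∈ F_{p,r}(ẑ)`: on `Λ'` its
residual is a block of the least-squares residual of `v_{Λ'}`, of norm at most `√(p - r) v_max`,
and on `Λ \ Λ'` it is at most `v_max + η' √(p - r) v_max`. So `χ` has at most `q` outliers, hence
so does the minimiser `x̂`, which therefore fits within `ϑ v_max` on `p - 2q` attack-free blocks.
There `‖Φ_{Γᵢⁿ}(x̂ - x)‖ ≤ (ϑ + 1) v_max`, and `Φ` restricted to any `p - 2q` blocks is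
injective by `q`-error correctability, with smallest singular value at least `ρ_{p,2q}(Φ) > 0`.
-/

namespace SecureEst

lemma finite_setOf_exists_eq {α β : Type*} [Finite α] (P : α → Prop) (f : α → β) :
    {b | ∃ a, P a ∧ b = f a}.Finite :=
  (Set.finite_range f).subset fun _ ⟨a, _, h⟩ => ⟨a, h.symm⟩

section EuclideanNorm

variable {m k : Type*} [Fintype m] [Fintype k]

lemma enorm_eq_norm (x : m → ℝ) : enorm x = ‖WithLp.toLp 2 x‖ := by
  simp [enorm, EuclideanSpace.norm_eq]

lemma enorm_eq_sqrt_dotProduct (x : m → ℝ) : enorm x = √(x ⬝ᵥ x) := by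
  simp [enorm, dotProduct, sq]

lemma enorm_nonneg (x : m → ℝ) : 0 ≤ enorm x := Real.sqrt_nonneg _

@[simp]
lemma enorm_zero : enorm (0 : m → ℝ) = 0 := by simp [enorm]

@[simp]
lemma enorm_eq_zero {x : m → ℝ} : enorm x = 0 ↔ x = 0 := by
  simp [enorm_eq_norm]

lemma enorm_sub_le (x y : m → ℝ) : enorm (x - y) ≤ enorm x + enorm y := by
  simpa only [enorm_eq_norm, WithLp.toLp_sub] using norm_sub_le _ _

lemma enorm_smul (c : ℝ) (x : m → ℝ) : enorm (c • x) = |c| * enorm x := by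
  simp only [enorm_eq_norm, WithLp.toLp_smul, norm_smul, Real.norm_eq_abs]

lemma exists_enorm_eq_one_smul {x : m → ℝ} (hx : x ≠ 0) :
    ∃ c : ℝ, 0 ≤ c ∧ ∃ u : m → ℝ, enorm u = 1 ∧ x = c • u := by
  have h : enorm x ≠ 0 := enorm_eq_zero.not.2 hx
  refine ⟨enorm x, enorm_nonneg x, (enorm x)⁻¹ • x, ?_, by rw [smul_inv_smul₀ h]⟩
  rw [enorm_smul, abs_inv, abs_of_nonneg (enorm_nonneg x), inv_mul_cancel₀ h]

lemma enorm_of_isEmpty [IsEmpty m] (x : m → ℝ) : enorm x = 0 := by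
  simp [enorm]

open scoped Matrix.Norms.L2Operator in
lemma bddAbove_enorm_mulVec (M : Matrix m k ℝ) :
    BddAbove {r | ∃ x : k → ℝ, enorm x = 1 ∧ r = enorm (M *ᵥ x)} := by
  classical
  refine ⟨‖M‖, ?_⟩
  rintro _ ⟨x, hx, rfl⟩
  simpa [enorm_eq_norm, (enorm_eq_norm x).symm.trans hx] using
    M.l2_opNorm_mulVec (WithLp.toLp 2 x)

lemma specNorm_nonneg (M : Matrix m k ℝ) : 0 ≤ specNorm M :=
  Real.sSup_nonneg <| by rintro _ ⟨x, -, rfl⟩; exact enorm_nonneg _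

lemma sigmaMin_nonneg (M : Matrix m k ℝ) : 0 ≤ sigmaMin M :=
  Real.sInf_nonneg <| by rintro _ ⟨x, -, rfl⟩; exact enorm_nonneg _

lemma sigmaMin_of_isEmpty [IsEmpty k] (M : Matrix m k ℝ) : sigmaMin M = 0 := by
  simp [sigmaMin, enorm_of_isEmpty]

lemma enorm_mulVec_le (M : Matrix m k ℝ) (x : k → ℝ) :
    enorm (M *ᵥ x) ≤ specNorm M * enorm x := by
  rcases eq_or_ne x 0 with rfl | hx
  · simp
  obtain ⟨c, hc, u, hu, rfl⟩ := exists_enorm_eq_one_smul hx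
  rw [mulVec_smul, enorm_smul, enorm_smul, abs_of_nonneg hc, hu, mul_one, mul_comm]
  exact mul_le_mul_of_nonneg_right (le_csSup (bddAbove_enorm_mulVec M) ⟨u, hu, rfl⟩) hc

lemma sigmaMin_mul_enorm_le (M : Matrix m k ℝ) (x : k → ℝ) :
    sigmaMin M * enorm x ≤ enorm (M *ᵥ x) := by
  rcases eq_or_ne x 0 with rfl | hx
  · simp
  obtain ⟨c, hc, u, hu, rfl⟩ := exists_enorm_eq_one_smul hx
  rw [mulVec_smul, enorm_smul, enorm_smul, abs_of_nonneg hc, hu, mul_one, mul_comm]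
  refine mul_le_mul_of_nonneg_left (csInf_le ⟨0, ?_⟩ ⟨u, hu, rfl⟩) hc
  rintro _ ⟨y, -, rfl⟩
  exact enorm_nonneg _

end EuclideanNorm

section Pseudoinverse

variable {m k : Type*} [Fintype m] [Fintype k] [DecidableEq k] {M : Matrix m k ℝ}

lemma isUnit_det_transpose_mul_self (hM : Function.Injective M.mulVec) : IsUnit (Mᵀ * M).det :=
  (isUnit_iff_isUnit_det _).1 <| by simpa using (PosDef.conjTranspose_mul_self M hM).isUnit

lemma pinv_mul_self (hM : Function.Injective M.mulVec) : pinv M * M = 1 := by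
  rw [pinv, Matrix.mul_assoc, nonsing_inv_mul _ (isUnit_det_transpose_mul_self hM)]

lemma pinv_mulVec_mulVec (hM : Function.Injective M.mulVec) (x : k → ℝ) :
    pinv M *ᵥ (M *ᵥ x) = x := by
  rw [mulVec_mulVec, pinv_mul_self hM, one_mulVec]

lemma transpose_mulVec_sub_mulVec_pinv (hM : Function.Injective M.mulVec) (w : m → ℝ) :
    Mᵀ *ᵥ (w - M *ᵥ (pinv M *ᵥ w)) = 0 := by
  rw [mulVec_sub, mulVec_mulVec, mulVec_mulVec, pinv, ← Matrix.mul_assoc,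
    mul_nonsing_inv _ (isUnit_det_transpose_mul_self hM), Matrix.one_mul, sub_self]

lemma enorm_sub_mulVec_pinv_le (hM : Function.Injective M.mulVec) (w : m → ℝ) :
    enorm (w - M *ᵥ (pinv M *ᵥ w)) ≤ enorm w := by
  set u := M *ᵥ (pinv M *ᵥ w)
  have horth : u ⬝ᵥ (w - u) = 0 := by
    rw [dotProduct_comm, dotProduct_mulVec, ← mulVec_transpose,
      transpose_mulVec_sub_mulVec_pinv hM, zero_dotProduct]
  have hpyth : w ⬝ᵥ w = u ⬝ᵥ u + (w - u) ⬝ᵥ (w - u) := by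
    conv_lhs => rw [← add_sub_cancel u w]
    rw [add_dotProduct, dotProduct_add, dotProduct_add, horth, dotProduct_comm (w - u) u, horth]
    ring
  rw [enorm_eq_sqrt_dotProduct, enorm_eq_sqrt_dotProduct, hpyth]
  exact Real.sqrt_le_sqrt (le_add_of_nonneg_left (by simpa using dotProduct_star_self_nonneg u))

lemma sigmaMin_pos [Nonempty k] (hM : Function.Injective M.mulVec) : 0 < sigmaMin M := by
  set s := specNorm (pinv M)
  have hbound : ∀ x : k → ℝ, enorm x = 1 → 1 ≤ s * enorm (M *ᵥ x) := fun x hx => by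
    simpa [pinv_mulVec_mulVec hM, hx] using enorm_mulVec_le (pinv M) (M *ᵥ x)
  obtain ⟨-, -, u, hu, -⟩ := exists_enorm_eq_one_smul (one_ne_zero : (1 : k → ℝ) ≠ 0)
  have hs : 0 < s := by
    by_contra! hs
    linarith [hbound u hu, mul_nonpos_of_nonpos_of_nonneg hs (enorm_nonneg (M *ᵥ u))]
  refine (inv_pos.2 hs).trans_le (le_csInf ⟨_, u, hu, rfl⟩ ?_)
  rintro _ ⟨x, hx, rfl⟩
  rw [inv_le_iff_one_le_mul₀' hs]
  exact hbound x hx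

end Pseudoinverse

variable {n p : ℕ}

lemma blk_zeroV (Λ : Finset (Fin p)) (z : Fin p × Fin n → ℝ) (i : Fin p) :
    blk (zeroV Λ z) i = if i ∈ Λ then blk z i else 0 := by
  split_ifs with h <;> ext j <;> simp [blk, zeroV, h]

lemma zeroB_mulVec (Λ : Finset (Fin p)) (Φ : Matrix (Fin p × Fin n) (Fin n) ℝ)
    (x : Fin n → ℝ) : zeroB Λ Φ *ᵥ x = zeroV Λ (Φ *ᵥ x) := by
  ext ij
  by_cases h : ij.1 ∈ Λ <;> simp [zeroV, zeroB, mulVec, dotProduct, h]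

lemma blockSupp_zeroV (Λ : Finset (Fin p)) (z : Fin p × Fin n → ℝ) :
    blockSupp (zeroV Λ z) = Λ ∩ blockSupp z := by
  ext i
  by_cases h : i ∈ Λ <;> simp [blockSupp, blk_zeroV, h]

lemma enorm_eq_sqrt_sum_enorm_blk_sq (w : Fin p × Fin n → ℝ) :
    enorm w = √(∑ i, enorm (blk w i) ^ 2) := by
  simp only [enorm, Fintype.sum_prod_type, blk]
  congr 1
  exact sum_congr rfl fun i _ => (Real.sq_sqrt (sum_nonneg fun j _ => sq_nonneg _)).symm

lemma enorm_blk_le (w : Fin p × Fin n → ℝ) (i : Fin p) : enorm (blk w i) ≤ enorm w := by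
  rw [enorm_eq_sqrt_sum_enorm_blk_sq w, ← Real.sqrt_sq (enorm_nonneg (blk w i))]
  exact Real.sqrt_le_sqrt (single_le_sum (fun j _ => sq_nonneg (enorm (blk w j))) (mem_univ i))

lemma enorm_zeroV_le {Λ : Finset (Fin p)} {w : Fin p × Fin n → ℝ} {c : ℝ} (hc : 0 ≤ c)
    (h : ∀ i ∈ Λ, enorm (blk w i) ≤ c) : enorm (zeroV Λ w) ≤ √(Λ.card : ℝ) * c := by
  rw [enorm_eq_sqrt_sum_enorm_blk_sq, ← Real.sqrt_sq hc, ← Real.sqrt_mul (Nat.cast_nonneg _)]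
  refine Real.sqrt_le_sqrt ?_
  calc ∑ i, enorm (blk (zeroV Λ w) i) ^ 2 = ∑ i ∈ Λ, enorm (blk w i) ^ 2 := by
        simp [blk_zeroV, apply_ite, Finset.sum_ite_mem]
    _ ≤ Λ.card * c ^ 2 := by
        simpa using sum_le_card_nsmul Λ _ _ fun i hi =>
          pow_le_pow_left₀ (enorm_nonneg _) (h i hi) 2

lemma blockSupp_neg (z : Fin p × Fin n → ℝ) : blockSupp (-z) = blockSupp z := by
  simp only [blockSupp, show ∀ i, blk (-z) i = -blk z i from fun _ => rfl, neg_ne_zero]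

lemma zeroV_add_zeroV_compl (Λ : Finset (Fin p)) (z : Fin p × Fin n → ℝ) :
    zeroV Λ z + zeroV Λᶜ z = z := by
  ext ij
  by_cases h : ij.1 ∈ Λ <;> simp [zeroV, h]

lemma Sparse.exists_card_eq_forall_blk_eq_zero {q : ℕ} {e : Fin p × Fin n → ℝ}
    (he : Sparse q e) : ∃ Λ : Finset (Fin p), Λ.card = p - q ∧ ∀ i ∈ Λ, blk e i = 0 := by
  obtain ⟨Λ, hsub, hcard⟩ := exists_subset_card_eq (s := (blockSupp e)ᶜ) (n := p - q) <| by
    rw [card_compl, Fintype.card_fin]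
    unfold Sparse l0n at he
    omega
  exact ⟨Λ, hcard, fun i hi => by simpa [blockSupp] using hsub hi⟩

lemma rho_le_sigmaMin (Φ : Matrix (Fin p × Fin n) (Fin n) ℝ) {k : ℕ} {Λ : Finset (Fin p)}
    (hΛ : Λ.card = p - k) : rho Φ k ≤ sigmaMin (zeroB Λ Φ) :=
  csInf_le ⟨0, by rintro _ ⟨Λ, -, rfl⟩; exact sigmaMin_nonneg _⟩ ⟨Λ, hΛ, rfl⟩

lemma rho_of_isEmpty [IsEmpty (Fin n)] (Φ : Matrix (Fin p × Fin n) (Fin n) ℝ) (k : ℕ) :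
    rho Φ k = 0 :=
  le_antisymm (Real.sInf_nonpos <| by rintro _ ⟨Λ, -, rfl⟩; rw [sigmaMin_of_isEmpty])
    (Real.sInf_nonneg <| by rintro _ ⟨Λ, -, rfl⟩; exact sigmaMin_nonneg _)

lemma rho_mul_enorm_le {Φ : Matrix (Fin p × Fin n) (Fin n) ℝ} {k : ℕ} {Λ : Finset (Fin p)}
    (hΛ : Λ.card = p - k) {d : Fin n → ℝ} {c : ℝ} (hc : 0 ≤ c)
    (h : ∀ i ∈ Λ, enorm (blk (Φ *ᵥ d) i) ≤ c) :
    rho Φ k * enorm d ≤ √((p - k : ℕ) : ℝ) * c :=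
  calc rho Φ k * enorm d ≤ sigmaMin (zeroB Λ Φ) * enorm d :=
        mul_le_mul_of_nonneg_right (rho_le_sigmaMin Φ hΛ) (enorm_nonneg d)
    _ ≤ enorm (zeroB Λ Φ *ᵥ d) := sigmaMin_mul_enorm_le _ _
    _ ≤ √((p - k : ℕ) : ℝ) * c := by
        rw [zeroB_mulVec, ← hΛ]
        exact enorm_zeroV_le hc h

namespace ErrCorrectable

variable {q : ℕ} {Φ : Matrix (Fin p × Fin n) (Fin n) ℝ}

lemma eq_zero_of_l0n_mulVec_le (hc : ErrCorrectable Φ q) {x : Fin n → ℝ}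
    (hx : l0n (Φ *ᵥ x) ≤ 2 * q) : x = 0 := by
  set w := Φ *ᵥ x
  unfold l0n at hx
  obtain ⟨S, hS, hScard⟩ := exists_subset_card_eq (tsub_le_self (a := (blockSupp w).card) (b := q))
  -- `Φ x - w|_{Sᶜ} = Φ 0 + w|_S` and both corrections have at most `q` nonzero blocks
  refine hc x 0 (-zeroV Sᶜ w) (zeroV S w) ?_ ?_ ?_
  · rw [Sparse, l0n, blockSupp_neg, blockSupp_zeroV, inter_comm, ← sdiff_eq_inter_compl,
      card_sdiff_of_subset hS]
    omega
  · rw [Sparse, l0n, blockSupp_zeroV]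
    exact (card_le_card inter_subset_left).trans (by omega)
  · rw [mulVec_zero, zero_add, ← sub_eq_add_neg, sub_eq_iff_eq_add, zeroV_add_zeroV_compl]

lemma injective_zeroB (hc : ErrCorrectable Φ q) {Λ : Finset (Fin p)} (hΛ : p ≤ Λ.card + 2 * q) :
    Function.Injective (zeroB Λ Φ).mulVec := by
  intro a b hab
  rw [← sub_eq_zero]
  refine hc.eq_zero_of_l0n_mulVec_le ?_
  have hdisj : Disjoint Λ (blockSupp (Φ *ᵥ (a - b))) := by
    rw [disjoint_iff_inter_eq_empty, ← blockSupp_zeroV, ← zeroB_mulVec, mulVec_sub, hab, sub_self]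
    simp only [blockSupp, filter_eq_empty_iff, not_not]
    exact fun _ _ => rfl
  have hunion := card_union_of_disjoint hdisj
  have huniv := card_le_univ (Λ ∪ blockSupp (Φ *ᵥ (a - b)))
  rw [Fintype.card_fin] at huniv
  unfold l0n
  omega

lemma two_mul_lt [Nonempty (Fin n)] (hc : ErrCorrectable Φ q) : 2 * q < p := by
  by_contra! h
  refine one_ne_zero (hc.eq_zero_of_l0n_mulVec_le (x := 1) ?_)
  exact (card_le_univ _).trans (by simpa using h)

lemma rho_pos [Nonempty (Fin n)] (hc : ErrCorrectable Φ q) : 0 < rho Φ (2 * q) := by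
  obtain ⟨Λ₀, -, hΛ₀⟩ := exists_subset_card_eq (s := (univ : Finset (Fin p))) (n := p - 2 * q)
    (by simp)
  set S := {r | ∃ Λ : Finset (Fin p), Λ.card = p - 2 * q ∧ r = sigmaMin (zeroB Λ Φ)}
  obtain ⟨Λ, hΛ, hmin⟩ :=
    (show S.Nonempty from ⟨_, Λ₀, hΛ₀, rfl⟩).csInf_mem (finite_setOf_exists_eq _ _)
  rw [rho, hmin]
  exact sigmaMin_pos (hc.injective_zeroB (by omega))

end ErrCorrectable

section Estimation

variable {Φ : Matrix (Fin p × Fin n) (Fin n) ℝ} {q r : ℕ}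

lemma exists_subset_forall_specNorm_le_eta' {Λ : Finset (Fin p)} (hΛ : Λ.card = p - q)
    (hqr : q ≤ r) : ∃ Λ' ⊆ Λ, Λ'.card = p - r ∧
      ∀ i ∈ Λ \ Λ', specNorm (rowBlk Φ i * pinv (zeroB Λ' Φ)) ≤ eta' Φ q r := by
  set worst := fun Λ' : Finset (Fin p) =>
    sSup {c | ∃ i ∈ Λ \ Λ', c = specNorm (rowBlk Φ i * pinv (zeroB Λ' Φ))}
  set S := {b | ∃ Λ' : Finset (Fin p), Λ' ⊆ Λ ∧ Λ'.card = p - r ∧ b = worst Λ'}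
  obtain ⟨Λ₀, hsub₀, hcard₀⟩ := exists_subset_card_eq (show p - r ≤ Λ.card by omega)
  have hfin : S.Finite := (Set.finite_range worst).subset <| by
    rintro _ ⟨Λ', -, -, rfl⟩
    exact ⟨Λ', rfl⟩
  obtain ⟨Λ', hsub, hcard, hmin⟩ :=
    (show S.Nonempty from ⟨_, Λ₀, hsub₀, hcard₀, rfl⟩).csInf_mem hfin
  refine ⟨Λ', hsub, hcard, fun i hi => ?_⟩
  calc specNorm (rowBlk Φ i * pinv (zeroB Λ' Φ)) ≤ worst Λ' :=
        le_csSup (finite_setOf_exists_eq _ _).bddAbove ⟨i, hi, rfl⟩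
    _ = sInf S := hmin.symm
    _ ≤ eta' Φ q r := le_csSup (finite_setOf_exists_eq _ _).bddAbove ⟨Λ, hΛ, rfl⟩

lemma blk_mulVec_add_add {x : Fin n → ℝ} {e : Fin p × Fin n → ℝ} (v : Fin p × Fin n → ℝ)
    {i : Fin p} (he : blk e i = 0) : blk (Φ *ᵥ x + e + v) i = rowBlk Φ i *ᵥ x + blk v i := by
  rw [show blk (Φ *ᵥ x + e + v) i = rowBlk Φ i *ᵥ x + blk e i + blk v i from rfl, he, add_zero]

lemma enorm_blk_sub_mulVec_pinv_le {Λ' : Finset (Fin p)}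
    (hM : Function.Injective (zeroB Λ' Φ).mulVec) (hΛ' : Λ'.card = p - r)
    {v : Fin p × Fin n → ℝ} {vmax : ℝ} (hvmax : 0 ≤ vmax) (hv : ∀ i, enorm (blk v i) ≤ vmax)
    {i : Fin p} (hi : i ∉ Λ' → specNorm (rowBlk Φ i * pinv (zeroB Λ' Φ)) ≤ eta' Φ q r) :
    enorm (blk v i - rowBlk Φ i *ᵥ (pinv (zeroB Λ' Φ) *ᵥ zeroV Λ' v)) ≤ theta Φ q r * vmax := by
  set M := zeroB Λ' Φ
  set vb := zeroV Λ' v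
  have hvb : enorm vb ≤ √((p - r : ℕ) : ℝ) * vmax := hΛ' ▸ enorm_zeroV_le hvmax fun i _ => hv i
  by_cases hi' : i ∈ Λ'
  · have hres : blk v i - rowBlk Φ i *ᵥ (pinv M *ᵥ vb) = blk (vb - M *ᵥ (pinv M *ᵥ vb)) i := by
      rw [show blk (vb - M *ᵥ (pinv M *ᵥ vb)) i = blk vb i - blk (M *ᵥ (pinv M *ᵥ vb)) i from rfl,
        zeroB_mulVec, blk_zeroV, blk_zeroV, if_pos hi', if_pos hi']
      rfl
    calc enorm (blk v i - rowBlk Φ i *ᵥ (pinv M *ᵥ vb))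
        ≤ enorm (vb - M *ᵥ (pinv M *ᵥ vb)) := hres ▸ enorm_blk_le _ i
      _ ≤ √((p - r : ℕ) : ℝ) * vmax := (enorm_sub_mulVec_pinv_le hM vb).trans hvb
      _ ≤ theta Φ q r * vmax := mul_le_mul_of_nonneg_right (le_max_right _ _) hvmax
  · have hspec := hi hi'
    calc enorm (blk v i - rowBlk Φ i *ᵥ (pinv M *ᵥ vb))
        ≤ enorm (blk v i) + enorm ((rowBlk Φ i * pinv M) *ᵥ vb) := by
          rw [mulVec_mulVec]
          exact enorm_sub_le _ _
      _ ≤ vmax + eta' Φ q r * (√((p - r : ℕ) : ℝ) * vmax) :=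
          add_le_add (hv i) <| (enorm_mulVec_le _ _).trans <|
            mul_le_mul hspec hvb (enorm_nonneg _) ((specNorm_nonneg _).trans hspec)
      _ = (eta' Φ q r * √((p - r : ℕ) : ℝ) + 1) * vmax := by ring
      _ ≤ theta Φ q r * vmax := mul_le_mul_of_nonneg_right (le_max_left _ _) hvmax

lemma enorm_blk_mulVec_sub_le {x xhat : Fin n → ℝ} {e v : Fin p × Fin n → ℝ} {i : Fin p}
    {vmax τ : ℝ} (he : blk e i = 0) (hv : enorm (blk v i) ≤ vmax)
    (hres : enorm (blk (Φ *ᵥ x + e + v) i - rowBlk Φ i *ᵥ xhat) ≤ τ) :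
    enorm (blk (Φ *ᵥ (xhat - x)) i) ≤ τ + vmax :=
  calc enorm (blk (Φ *ᵥ (xhat - x)) i)
      = enorm (blk v i - (blk (Φ *ᵥ x + e + v) i - rowBlk Φ i *ᵥ xhat)) := by
        change enorm (rowBlk Φ i *ᵥ (xhat - x)) = _
        rw [blk_mulVec_add_add v he, mulVec_sub]
        congr 1
        abel
    _ ≤ τ + vmax := (enorm_sub_le _ _).trans (add_comm vmax τ ▸ add_le_add hv hres)

def outliers (Φ : Matrix (Fin p × Fin n) (Fin n) ℝ) (z : Fin p × Fin n → ℝ) (τ : ℝ)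
    (χ : Fin n → ℝ) : Finset (Fin p) :=
  univ.filter fun i => τ < enorm (blk z i - rowBlk Φ i *ᵥ χ)

lemma exists_mem_Fset_card_outliers_le (hc : ErrCorrectable Φ q) (hqr : q ≤ r)
    (hr2q : r ≤ 2 * q) {x : Fin n → ℝ} {e v : Fin p × Fin n → ℝ} {Λ : Finset (Fin p)}
    (hΛ : Λ.card = p - q) (he : ∀ i ∈ Λ, blk e i = 0) {vmax : ℝ} (hvmax : 0 ≤ vmax)
    (hv : ∀ i, enorm (blk v i) ≤ vmax) :
    ∃ χ ∈ Fset Φ r (Φ *ᵥ x + e + v),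
      (outliers Φ (Φ *ᵥ x + e + v) (theta Φ q r * vmax) χ).card ≤ q := by
  obtain ⟨Λ', hsub, hcard, hspec⟩ := exists_subset_forall_specNorm_le_eta' (Φ := Φ) hΛ hqr
  have hM := hc.injective_zeroB (Λ := Λ') (by omega)
  refine ⟨_, ⟨Λ', hcard, rfl⟩, ?_⟩
  have hχ : pinv (zeroB Λ' Φ) *ᵥ zeroV Λ' (Φ *ᵥ x + e + v)
      = x + pinv (zeroB Λ' Φ) *ᵥ zeroV Λ' v := by
    have : zeroV Λ' (Φ *ᵥ x + e + v) = zeroB Λ' Φ *ᵥ x + zeroV Λ' v := by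
      ext ⟨i, j⟩
      by_cases h : i ∈ Λ'
      · simpa [zeroV, zeroB_mulVec, h, blk] using congrFun (he i (hsub h)) j
      · simp [zeroV, zeroB_mulVec, h]
    rw [this, mulVec_add, pinv_mulVec_mulVec hM]
  have hclean : outliers Φ (Φ *ᵥ x + e + v) (theta Φ q r * vmax)
      (pinv (zeroB Λ' Φ) *ᵥ zeroV Λ' (Φ *ᵥ x + e + v)) ⊆ Λᶜ := by
    intro i hi
    rw [mem_compl]
    intro hiΛ
    refine (mem_filter.1 hi).2.not_ge ?_
    rw [hχ, blk_mulVec_add_add v (he i hiΛ), mulVec_add, add_sub_add_left_eq_sub]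
    exact enorm_blk_sub_mulVec_pinv_le hM hcard hvmax hv fun hi' => hspec i (mem_sdiff.2 ⟨hiΛ, hi'⟩)
  refine (card_le_card hclean).trans ?_
  rw [card_compl, Fintype.card_fin, hΛ]
  omega

end Estimation

end SecureEst

open SecureEst in
theorem relaxed_l0_error_bound_general {n p : ℕ}
    (Φ : Matrix (Fin p × Fin n) (Fin n) ℝ) (q r : ℕ)
    (hc : ErrCorrectable Φ q) (hqr : q ≤ r) (hr2q : r ≤ 2 * q)
    (x : Fin n → ℝ) (e v : Fin p × Fin n → ℝ) (vmax : ℝ)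
    (he : Sparse q e) (hv : ∀ i : Fin p, SecureEst.enorm (blk v i) ≤ vmax)
    (zhat : Fin p × Fin n → ℝ) (hz : zhat = Φ.mulVec x + e + v)
    (xhat : Fin n → ℝ)
    (hmin : ∀ χ ∈ Fset Φ r zhat,
      (Finset.univ.filter fun i : Fin p =>
          theta Φ q r * vmax < SecureEst.enorm (blk zhat i - (rowBlk Φ i).mulVec xhat)).card ≤
        (Finset.univ.filter fun i : Fin p =>
          theta Φ q r * vmax < SecureEst.enorm (blk zhat i - (rowBlk Φ i).mulVec χ)).card) :
    SecureEst.enorm (xhat - x) ≤ kappaC Φ q r * vmax := by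
  subst hz
  rcases isEmpty_or_nonempty (Fin n) with hn | hn
  · -- without a state `ρ = 0`, and `κ^c = 0` by the convention `a / 0 = 0`
    rw [enorm_of_isEmpty, kappaC, rho_of_isEmpty, div_zero, zero_mul]
  have hp := hc.two_mul_lt
  have hvmax : 0 ≤ vmax := (enorm_nonneg _).trans (hv ⟨0, by omega⟩)
  obtain ⟨Λ, hΛ, he0⟩ := he.exists_card_eq_forall_blk_eq_zero
  obtain ⟨χ, hχ, hχq⟩ := exists_mem_Fset_card_outliers_le hc hqr hr2q hΛ he0 hvmax hv
  set O := outliers Φ (Φ *ᵥ x + e + v) (theta Φ q r * vmax) xhat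
  have hO : O.card ≤ q := (hmin χ hχ).trans hχq
  obtain ⟨Λs, hΛs, hcard⟩ := exists_subset_card_eq (s := Λ \ O) (n := p - 2 * q) <| by
    have := le_card_sdiff O Λ
    omega
  have hblk : ∀ i ∈ Λs, SecureEst.enorm (blk (Φ *ᵥ (xhat - x)) i) ≤ theta Φ q r * vmax + vmax :=
    fun i hi => by
      obtain ⟨hiΛ, hiO⟩ := mem_sdiff.1 (hΛs hi)
      exact enorm_blk_mulVec_sub_le (he0 i hiΛ) (hv i) (by simpa [O, outliers] using hiO)
  have hθ : 0 ≤ theta Φ q r := (Real.sqrt_nonneg _).trans (le_max_right _ _)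
  have hbound := rho_mul_enorm_le hcard (by positivity) hblk
  rw [kappaC, div_mul_eq_mul_div, le_div_iff₀ hc.rho_pos]
  linarith

open SecureEst in
/-- Theorem 3.(ii): any minimizer `xhat ∈ F_{p,r}(zhat)` of the count
`|{i : ‖zhatᵢ − Φ_{Γᵢⁿ}χ‖₂ > v'_max}|` satisfies `‖xhat − x‖₂ ≤ κ^c_{p,q,r}(Φ) v_max`. -/
theorem relaxed_l0_error_bound {n p : ℕ}
    (Φ : Matrix (Fin p × Fin n) (Fin n) ℝ) (q r : ℕ)
    (hc : ErrCorrectable Φ q) (hqr : q ≤ r) (hr2q : r ≤ 2 * q)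
    (x : Fin n → ℝ) (e v : Fin p × Fin n → ℝ) (vmax : ℝ)
    (he : Sparse q e) (hv : ∀ i : Fin p, SecureEst.enorm (blk v i) ≤ vmax)
    (zhat : Fin p × Fin n → ℝ) (hz : zhat = Φ.mulVec x + e + v)
    (xhat : Fin n → ℝ)
    (hmem : xhat ∈ Fset Φ r zhat)
    (hmin : ∀ χ ∈ Fset Φ r zhat,
      (Finset.univ.filter fun i : Fin p =>
          theta Φ q r * vmax < SecureEst.enorm (blk zhat i - (rowBlk Φ i).mulVec xhat)).card ≤
        (Finset.univ.filter fun i : Fin p =>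
          theta Φ q r * vmax < SecureEst.enorm (blk zhat i - (rowBlk Φ i).mulVec χ)).card) :
    SecureEst.enorm (xhat - x) ≤ kappaC Φ q r * vmax :=
  relaxed_l0_error_bound_general Φ q r hc hqr hr2q x e v vmax he hv zhat hz xhat hmin
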